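/- arXiv:2406.17264 — 2 statements merged into one kernel-verified Lean document; each statement's English description precedes it below -/
import Mathlib

section
/- Let α > 0 and Φ ≥ 0, and let P(x_h) = (2(α+2)Φ)/((α+4)π) · (1 − (α/(α+2))(x₁²+x₂²)) for x_h = (x₁,x₂) ∈ ℝ². Then the squared L² norm of its gradient over the unit disk is exactly ∫_D |∇P(x_h)|² dx_h = 8α²Φ²/((α+4)²π); in particular ‖∇P‖_{L²(D)} ≤ (2√2/√π) · Φ · α/(1+α). -/
open MeasureTheory

/-- Partial derivative `∂_{x_i} f` of a scalar function on `ℝ²`. -/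
noncomputable def pd2 (i : Fin 2) (f : (Fin 2 → ℝ) → ℝ) (x : Fin 2 → ℝ) : ℝ :=
  fderiv ℝ f x (Pi.single i 1)

/-- The open unit disk in the plane. -/
def unitDisk : Set (Fin 2 → ℝ) := {xh | xh 0 ^ 2 + xh 1 ^ 2 < 1}

/-- The profile of the generalized Hagen–Poiseuille flow on the unit disk. -/
noncomputable def Pprof (α Φ : ℝ) (xh : Fin 2 → ℝ) : ℝ :=
  (2 * (α + 2) * Φ) / ((α + 4) * Real.pi) *
    (1 - α / (α + 2) * (xh 0 ^ 2 + xh 1 ^ 2))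

/-!
`∇P` is the linear field `-(4αΦ/((α+4)π)) x`, so `|∇P|²` is a constant multiple of `|x|²`.
The second moment of the unit ball in dimension `d` is `d/(d+2)` times its volume, by
integrating in polar coordinates; for the disk this gives `∫_D |x|² = π/2`. The bound then
reduces to `α + 4 ≥ 1 + α`.
-/

section BallMoments

open Set Metric Module

theorem integral_Ioi_pow_smul_indicator_Iio_one (m n : ℕ) :
    ∫ r in Ioi (0 : ℝ), r ^ m • (Iio 1).indicator (· ^ n) r = 1 / (m + n + 1) := by
  calc ∫ r in Ioi (0 : ℝ), r ^ m • (Iio 1).indicator (· ^ n) r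
      = ∫ r in Ioi (0 : ℝ), (Iio 1).indicator (· ^ (m + n)) r := by
        congr 1 with r
        by_cases hr : r < 1 <;> simp [indicator, hr, pow_add]
    _ = ∫ r in (0 : ℝ)..1, r ^ (m + n) := by
        rw [setIntegral_indicator measurableSet_Iio, Ioi_inter_Iio,
          intervalIntegral.integral_of_le zero_le_one, integral_Ioc_eq_integral_Ioo]
    _ = 1 / (m + n + 1) := by simp [integral_pow]

theorem setIntegral_ball_norm_pow {E : Type*} [NormedAddCommGroup E] [NormedSpace ℝ E]
    [FiniteDimensional ℝ E] [Nontrivial E] [MeasurableSpace E] [BorelSpace E]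
    (μ : Measure E) [μ.IsAddHaarMeasure] (n : ℕ) :
    ∫ x in ball (0 : E) 1, ‖x‖ ^ n ∂μ = finrank ℝ E / (finrank ℝ E + n) * μ.real (ball 0 1) := by
  have hradial : (ball (0 : E) 1).indicator (‖·‖ ^ n) = fun x ↦ (Iio 1).indicator (· ^ n) ‖x‖ := by
    ext x; simp [indicator]
  have hdim : ((finrank ℝ E - 1 : ℕ) : ℝ) + 1 = finrank ℝ E := by
    rw [Nat.cast_pred finrank_pos, sub_add_cancel]
  rw [← integral_indicator measurableSet_ball, hradial, integral_fun_norm_addHaar,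
    integral_Ioi_pow_smul_indicator_Iio_one, add_right_comm, hdim]
  simp only [nsmul_eq_mul, smul_eq_mul]
  ring

end BallMoments

theorem setIntegral_unitDisk_sq_add_sq :
    ∫ xh in unitDisk, (xh 0 ^ 2 + xh 1 ^ 2) = Real.pi / 2 := by
  have hvol := EuclideanSpace.volume_preserving_symm_measurableEquiv_toLp (Fin 2)
  have hnorm (x : EuclideanSpace ℝ (Fin 2)) : ‖x‖ ^ 2 = x 0 ^ 2 + x 1 ^ 2 := by
    rw [EuclideanSpace.real_norm_sq_eq, Fin.sum_univ_two]
  have hdisk : (MeasurableEquiv.toLp 2 (Fin 2 → ℝ)).symm ⁻¹' unitDisk = Metric.ball 0 1 := by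
    ext x
    rw [Set.mem_preimage, mem_ball_zero_iff, ← sq_lt_one_iff₀ (norm_nonneg _), hnorm]
    rfl
  rw [← hvol.setIntegral_preimage_emb (MeasurableEquiv.measurableEmbedding _), hdisk]
  simp_rw [MeasurableEquiv.coe_toLp_symm, ← hnorm]
  rw [setIntegral_ball_norm_pow]
  simp [Measure.real, Real.pi_nonneg]
  ring

theorem pd2_sq_add_sq (i : Fin 2) (x : Fin 2 → ℝ) :
    pd2 i (fun y ↦ y 0 ^ 2 + y 1 ^ 2) x = 2 * x i := by
  have hd (j : Fin 2) :
      HasFDerivAt (fun y : Fin 2 → ℝ ↦ y j) (ContinuousLinearMap.proj (R := ℝ) (φ := fun _ ↦ ℝ) j) x :=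
    hasFDerivAt_apply j x
  rw [pd2, fderiv_fun_add (by fun_prop) (by fun_prop), fderiv_fun_pow _ (hd 0).differentiableAt,
    fderiv_fun_pow _ (hd 1).differentiableAt, (hd 0).fderiv, (hd 1).fderiv]
  fin_cases i <;> simp

theorem pd2_Pprof {α : ℝ} (hα : α + 2 ≠ 0) (Φ : ℝ) (i : Fin 2) (x : Fin 2 → ℝ) :
    pd2 i (Pprof α Φ) x = -(4 * α * Φ / ((α + 4) * Real.pi)) * x i := by
  have hsq := pd2_sq_add_sq i x
  unfold pd2 at hsq ⊢
  unfold Pprof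
  rw [fderiv_const_mul (by fun_prop), fderiv_const_sub, fderiv_const_mul (by fun_prop)]
  simp only [neg_apply, smul_apply, hsq, smul_eq_mul]
  field_simp
  ring

theorem sqrt_eight_sq_div_sq_add_four_le {α Φ : ℝ} (hα : 0 ≤ α) (hΦ : 0 ≤ Φ) :
    Real.sqrt (8 * α ^ 2 * Φ ^ 2 / ((α + 4) ^ 2 * Real.pi))
      ≤ (2 * Real.sqrt 2 / Real.sqrt Real.pi) * Φ * (α / (1 + α)) := by
  have hsq : 8 * α ^ 2 * Φ ^ 2 / ((α + 4) ^ 2 * Real.pi)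
      = ((2 * Real.sqrt 2 / Real.sqrt Real.pi) * Φ * (α / (α + 4))) ^ 2 := by
    rw [mul_pow, mul_pow, div_pow, div_pow, mul_pow, Real.sq_sqrt zero_le_two,
      Real.sq_sqrt Real.pi_nonneg]
    field_simp
    ring
  rw [hsq, Real.sqrt_sq (by positivity)]
  gcongr _ * (α / ?_)
  linarith

/-- Exact value of the squared `L²` norm of the gradient of the Hagen–Poiseuille
profile on the unit disk, and the resulting bound `‖∇P‖_{L²(D)} ≤ (2√2/√π)·Φ·α/(1+α)`. -/
theorem stmt7 (α Φ : ℝ) (hα : 0 < α) (hΦ : 0 ≤ Φ) :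
    (∫ xh in unitDisk,
        ((pd2 0 (Pprof α Φ) xh) ^ 2 + (pd2 1 (Pprof α Φ) xh) ^ 2))
      = 8 * α ^ 2 * Φ ^ 2 / ((α + 4) ^ 2 * Real.pi) ∧
    Real.sqrt (∫ xh in unitDisk,
        ((pd2 0 (Pprof α Φ) xh) ^ 2 + (pd2 1 (Pprof α Φ) xh) ^ 2))
      ≤ (2 * Real.sqrt 2 / Real.sqrt Real.pi) * Φ * (α / (1 + α)) := by
  have hgrad (xh : Fin 2 → ℝ) :
      (pd2 0 (Pprof α Φ) xh) ^ 2 + (pd2 1 (Pprof α Φ) xh) ^ 2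
        = (4 * α * Φ / ((α + 4) * Real.pi)) ^ 2 * (xh 0 ^ 2 + xh 1 ^ 2) := by
    rw [pd2_Pprof (by linarith), pd2_Pprof (by linarith)]
    ring
  have hval : ∫ xh in unitDisk, ((pd2 0 (Pprof α Φ) xh) ^ 2 + (pd2 1 (Pprof α Φ) xh) ^ 2)
      = 8 * α ^ 2 * Φ ^ 2 / ((α + 4) ^ 2 * Real.pi) := by
    simp_rw [hgrad]
    rw [integral_const_mul, setIntegral_unitDisk_sq_add_sq]
    field_simp
    ring
  exact ⟨hval, hval ▸ sqrt_eight_sq_div_sq_add_four_le hα.le hΦ⟩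
end

section
/- Let C ∈ ℝ and Φ ≥ 0, and let u_h(x) = (−Cx₂, Cx₁, Φ/π) be the helical flow. Then: (i) the stress tensor vanishes identically, S u_h(x) = 0 for all x ∈ ℝ³, so in particular 2(S u_h(x) n)_tan = 0 for every x with x₁² + x₂² = 1, where n = (x₁, x₂, 0); (ii) u_h(x)·n = 0 whenever x₁² + x₂² = 1; and (iii) ∫_D (u_h)₃(x₁, x₂, z) dx₁dx₂ = Φ for every z ∈ ℝ. Hence u_h solves the generalized Leray problem in the unit cylinder with the total Navier-slip boundary condition (friction ratio α = 0) and flux Φ for every C ∈ ℝ, so uniqueness fails for α = 0 even when Φ = 0. -/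
/-! The stress tensor vanishes because `∇u_h` is a multiple of a fixed antisymmetric matrix
(a rigid rotation about the axis plus a constant axial translation); `u_h` is tangent to every
circle around the axis; and the constant axial speed `Φ/π` times the area `π` of the disk gives
the flux `Φ`. -/

open MeasureTheory

/-- Partial derivative `∂_{x_i} f` of a scalar function on `ℝ³`. -/
noncomputable def pd (i : Fin 3) (f : (Fin 3 → ℝ) → ℝ) (x : Fin 3 → ℝ) : ℝ :=
  fderiv ℝ f x (Pi.single i 1)

/-- The helical flow `u_h(x) = (-Cx₂, Cx₁, Φ/π)`. -/
noncomputable def uh (C Φ : ℝ) (x : Fin 3 → ℝ) : Fin 3 → ℝ :=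
  ![-C * x 1, C * x 0, Φ / Real.pi]

lemma pd_const (c : ℝ) (j : Fin 3) (x : Fin 3 → ℝ) : pd j (fun _ => c) x = 0 := by
  simp [pd]

lemma pd_const_mul_apply (c : ℝ) (k j : Fin 3) (x : Fin 3 → ℝ) :
    pd j (fun y => c * y k) x = if j = k then c else 0 := by
  have h : HasFDerivAt (fun y : Fin 3 → ℝ => c * y k)
      (c • (ContinuousLinearMap.proj k : (Fin 3 → ℝ) →L[ℝ] ℝ)) x :=
    (ContinuousLinearMap.proj k : (Fin 3 → ℝ) →L[ℝ] ℝ).hasFDerivAt.const_mul c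
  simp [pd, h.fderiv, Pi.single_apply, eq_comm]

lemma pd_uh_antisymm (C Φ : ℝ) (x : Fin 3 → ℝ) (i j : Fin 3) :
    pd j (fun y => uh C Φ y i) x = -pd i (fun y => uh C Φ y j) x := by
  fin_cases i <;> fin_cases j <;> simp [uh, pd_const, pd_const_mul_apply, -neg_mul]

lemma uh_stress_eq_zero (C Φ : ℝ) (x : Fin 3 → ℝ) (i j : Fin 3) :
    (pd j (fun y => uh C Φ y i) x + pd i (fun y => uh C Φ y j) x) / 2 = 0 := by
  rw [pd_uh_antisymm, neg_add_cancel, zero_div]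

lemma uh_mul_add_uh_mul_eq_zero (C Φ : ℝ) (x : Fin 3 → ℝ) :
    uh C Φ x 0 * x 0 + uh C Φ x 1 * x 1 = 0 := by
  simp only [uh, Matrix.cons_val_zero, Matrix.cons_val_one]
  ring

lemma measurableSet_unitDisk : MeasurableSet unitDisk :=
  measurableSet_lt (by fun_prop) measurable_const

lemma volume_unitDisk : volume unitDisk = ENNReal.ofReal Real.pi := by
  have hball : (MeasurableEquiv.toLp 2 (Fin 2 → ℝ)).symm ⁻¹' unitDisk
      = Metric.ball (0 : EuclideanSpace ℝ (Fin 2)) 1 := by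
    ext x
    simp [unitDisk, EuclideanSpace.ball_zero_eq _ zero_le_one, Fin.sum_univ_two,
      MeasurableEquiv.toLp]
    exact Iff.rfl
  rw [← (EuclideanSpace.volume_preserving_symm_measurableEquiv_toLp (Fin 2)).measure_preimage
      measurableSet_unitDisk.nullMeasurableSet, hball, EuclideanSpace.volume_ball]
  norm_num [Real.sq_sqrt Real.pi_pos.le]

lemma integral_uh_unitDisk (C Φ z : ℝ) : ∫ xh in unitDisk, uh C Φ ![xh 0, xh 1, z] 2 = Φ := by
  have h : ∀ xh : Fin 2 → ℝ, uh C Φ ![xh 0, xh 1, z] 2 = Φ / Real.pi := fun _ => rfl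
  simp_rw [h]
  rw [setIntegral_const, measureReal_def, volume_unitDisk, ENNReal.toReal_ofReal Real.pi_pos.le,
    smul_eq_mul, mul_div_cancel₀ _ Real.pi_ne_zero]

theorem stmt11_general (C Φ : ℝ) :
    (∀ x : Fin 3 → ℝ, ∀ i j : Fin 3,
      (pd j (fun y => uh C Φ y i) x + pd i (fun y => uh C Φ y j) x) / 2 = 0) ∧
    (∀ x : Fin 3 → ℝ, x 0 ^ 2 + x 1 ^ 2 = 1 →
      let n : Fin 3 → ℝ := ![x 0, x 1, 0]
      let S : Fin 3 → Fin 3 → ℝ := fun i j =>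
        (pd j (fun y => uh C Φ y i) x + pd i (fun y => uh C Φ y j) x) / 2
      let Sn : Fin 3 → ℝ := fun i => ∑ j : Fin 3, S i j * n j
      ∀ i : Fin 3, 2 * (Sn i - (∑ k : Fin 3, Sn k * n k) * n i) = 0) ∧
    (∀ x : Fin 3 → ℝ, x 0 ^ 2 + x 1 ^ 2 = 1 →
      uh C Φ x 0 * x 0 + uh C Φ x 1 * x 1 = 0) ∧
    (∀ z : ℝ, (∫ xh in unitDisk, uh C Φ ![xh 0, xh 1, z] 2) = Φ) :=
  ⟨uh_stress_eq_zero C Φ,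
    fun x _ i => by simp only [uh_stress_eq_zero, zero_mul, Finset.sum_const_zero, sub_zero,
      mul_zero],
    fun x _ => uh_mul_add_uh_mul_eq_zero C Φ x,
    integral_uh_unitDisk C Φ⟩

/-- The helical flow solves the generalized Leray problem in the unit cylinder with
the total Navier-slip condition (`α = 0`) and flux `Φ`:
(i) its stress tensor `S u_h = (∇u_h + (∇u_h)ᵀ)/2` vanishes identically, so in
particular `2 (S u_h n)_tan = 0` on the lateral boundary, where `n = (x₁,x₂,0)`;
(ii) `u_h · n = 0` on the lateral boundary; (iii) its flux through every
cross-section equals `Φ`. -/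
theorem stmt11 (C Φ : ℝ) (hΦ : 0 ≤ Φ) :
    (∀ x : Fin 3 → ℝ, ∀ i j : Fin 3,
      (pd j (fun y => uh C Φ y i) x + pd i (fun y => uh C Φ y j) x) / 2 = 0) ∧
    (∀ x : Fin 3 → ℝ, x 0 ^ 2 + x 1 ^ 2 = 1 →
      let n : Fin 3 → ℝ := ![x 0, x 1, 0]
      let S : Fin 3 → Fin 3 → ℝ := fun i j =>
        (pd j (fun y => uh C Φ y i) x + pd i (fun y => uh C Φ y j) x) / 2
      let Sn : Fin 3 → ℝ := fun i => ∑ j : Fin 3, S i j * n j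
      ∀ i : Fin 3, 2 * (Sn i - (∑ k : Fin 3, Sn k * n k) * n i) = 0) ∧
    (∀ x : Fin 3 → ℝ, x 0 ^ 2 + x 1 ^ 2 = 1 →
      uh C Φ x 0 * x 0 + uh C Φ x 1 * x 1 = 0) ∧
    (∀ z : ℝ, (∫ xh in unitDisk, uh C Φ ![xh 0, xh 1, z] 2) = Φ) :=
  stmt11_general C Φ
end
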